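/- Let β_z, β_x be class KL functions and γ_z^x, γ_z^r, γ_x^z, γ_x^r class K∞ functions satisfying the small-gain condition γ_z^x(γ_x^z(s)) < s for all s > 0. Then there exist class KL functions β̄_z, β̄_x, depending only on these functions, with the following property: for every t₀ ∈ ℝ and all continuous signals z : [t₀,∞) → ℝ^q, x : [t₀,∞) → ℝⁿ and every bounded piecewise-continuous r : [t₀,∞) → ℝᵐ such that for all t₀ ≤ t₀′ ≤ t, ‖z(t)‖ ≤ max{β_z(‖z(t₀′)‖, t−t₀′), γ_z^x(‖x_[t₀′,t]‖), γ_z^r(‖r_[t₀′,t]‖)} and ‖x(t)‖ ≤ max{β_x(‖x(t₀′)‖, t−t₀′), γ_x^z(‖z_[t₀′,t]‖), γ_x^r(‖r_[t₀′,t]‖)}, one has for all t ≥ t₀, with Λ(t₀) := (z(t₀), x(t₀)) ∈ ℝ^{q+n}: ‖z(t)‖ ≤ max{β̄_z(‖Λ(t₀)‖, t−t₀), γ̄_z^r(‖r_[t₀,t]‖)} and ‖x(t)‖ ≤ max{β̄_x(‖Λ(t₀)‖, t−t₀), γ̄_x^r(‖r_[t₀,t]‖)}, where γ̄_z^r :=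 max{γ_z^r, γ_z^x ∘ γ_x^r} and γ̄_x^r := max{γ_x^r, γ_x^z ∘ γ_z^r}. -/

import Mathlib

open Filter Set

/-- A function is of class K∞. -/
def IsClassKInf (γ : ℝ → ℝ) : Prop :=
  ContinuousOn γ (Set.Ici 0) ∧ StrictMonoOn γ (Set.Ici 0) ∧ γ 0 = 0 ∧
    Filter.Tendsto γ Filter.atTop Filter.atTop

/-- A function is of class KL. -/
def IsClassKL (β : ℝ → ℝ → ℝ) : Prop :=
  (∀ t, 0 ≤ t → ContinuousOn (fun s => β s t) (Set.Ici 0) ∧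
      StrictMonoOn (fun s => β s t) (Set.Ici 0) ∧ β 0 t = 0) ∧
  (∀ s, 0 ≤ s → AntitoneOn (fun t => β s t) (Set.Ici 0) ∧
      Filter.Tendsto (fun t => β s t) Filter.atTop (nhds 0))

/-- `‖v_[a,b]‖ = sup_{a ≤ τ ≤ b} ‖v τ‖`. -/
noncomputable def supNorm {E : Type*} [NormedAddCommGroup E] (v : ℝ → E) (a b : ℝ) : ℝ :=
  sSup ((fun τ => ‖v τ‖) '' Set.Icc a b)

/-- The next triggering time (in `EReal`, so that `sInf ∅ = ⊤`). -/
noncomputable def triggerTime {E : Type*} [NormedAddCommGroup E]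
    (γb : ℝ → ℝ) (r : ℝ → E) (tk : ℝ) : EReal :=
  sInf (((↑) : ℝ → EReal) ''
    {t : ℝ | tk < t ∧ (t - tk) * γb (supNorm r tk t) = supNorm r tk t ∧ supNorm r tk t ≠ 0})

/-!
Absorbing the loop gain with the small-gain condition `γ_z^x ∘ γ_x^z < id` bounds each state
uniformly by a class-K function `m` of the initial size, up to the input gain `γ̄^r`. Restarting
the ISS estimates at later times, each passage around the loop multiplies the part of the bound
not due to `r` by `γ_z^x ∘ γ_x^z`, whose iterates tend to `0`; hence for every initial size and
every `ε > 0` there is a uniform time after which that part is below `ε`. The uniform bound and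
the uniform convergence times combine into a class-KL function: the step profile `2⁻ᴶ` of the
convergence times is averaged over unit windows in the initial size to make it continuous, and
`min m θ ≤ √(m θ)`.
-/

open Topology

def IsClassK (α : ℝ → ℝ) : Prop :=
  ContinuousOn α (Ici 0) ∧ StrictMonoOn α (Ici 0) ∧ α 0 = 0

namespace IsClassK

variable {α α' : ℝ → ℝ} {a b : ℝ}

theorem mono (h : IsClassK α) (ha : 0 ≤ a) (hab : a ≤ b) : α a ≤ α b :=
  h.2.1.monotoneOn ha (ha.trans hab) hab

theorem nonneg (h : IsClassK α) (ha : 0 ≤ a) : 0 ≤ α a :=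
  h.2.2 ▸ h.mono le_rfl ha

theorem pos (h : IsClassK α) (ha : 0 < a) : 0 < α a :=
  h.2.2 ▸ h.2.1 self_mem_Ici ha.le ha

theorem map_max (h : IsClassK α) (ha : 0 ≤ a) (hb : 0 ≤ b) : α (max a b) = max (α a) (α b) :=
  h.2.1.monotoneOn.map_max ha hb

theorem mapsTo (h : IsClassK α) : MapsTo α (Ici 0) (Ici 0) := fun _ ha => h.nonneg ha

theorem comp (h : IsClassK α) (h' : IsClassK α') : IsClassK (fun s => α (α' s)) :=
  ⟨h.1.comp h'.1 h'.mapsTo, h.2.1.comp h'.2.1 h'.mapsTo, by simp only [h'.2.2, h.2.2]⟩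

theorem add (h : IsClassK α) (h' : IsClassK α') : IsClassK (fun s => α s + α' s) :=
  ⟨h.1.add h'.1, h.2.1.add_monotone h'.2.1.monotoneOn, by simp only [h.2.2, h'.2.2, add_zero]⟩

theorem le_self (h : IsClassK α) (hlt : ∀ s > 0, α s < s) (ha : 0 ≤ a) : α a ≤ a := by
  rcases ha.eq_or_lt with rfl | ha
  · exact h.2.2.le
  · exact (hlt a ha).le

theorem comp_lt_self_swap (h : IsClassK α)
    (hsg : ∀ s > 0, α (α' s) < s) : ∀ s > 0, α' (α s) < s := by
  intro s hs
  by_contra! hle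
  exact (hsg _ (h.pos hs)).not_ge (h.mono hs.le hle)

theorem exists_pos_le (h : IsClassK α) {ε : ℝ} (hε : 0 < ε) :
    ∃ δ > 0, δ ≤ ε ∧ α δ ≤ ε := by
  have hα : Tendsto α (𝓝[>] 0) (𝓝 0) := by
    simpa only [h.2.2] using
      (h.1 0 self_mem_Ici).tendsto.mono_left (nhdsWithin_mono _ Ioi_subset_Ici_self)
  have hid : Tendsto id (𝓝[>] (0 : ℝ)) (𝓝 0) := tendsto_nhdsWithin_of_tendsto_nhds tendsto_id
  obtain ⟨δ, hδ, hδε, hαδ⟩ := (eventually_mem_nhdsWithin.and <|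
    (hid.eventually (eventually_le_nhds hε)).and (hα.eventually (eventually_le_nhds hε))).exists
  exact ⟨δ, hδ, hδε, hαδ⟩

theorem tendsto_iterate_zero {q : ℝ → ℝ} (hq : IsClassK q) (hlt : ∀ s > 0, q s < s)
    {c : ℝ} (hc : 0 ≤ c) : Tendsto (fun k => q^[k] c) atTop (𝓝 0) := by
  have hnonneg : ∀ k, 0 ≤ q^[k] c := fun k => hq.mapsTo.iterate k hc
  have hanti : Antitone fun k => q^[k] c := antitone_nat_of_succ_le fun k => by
    rw [Function.iterate_succ_apply']
    exact hq.le_self hlt (hnonneg k)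
  have hlim := tendsto_atTop_ciInf hanti ⟨0, by rintro _ ⟨k, rfl⟩; exact hnonneg k⟩
  set L := ⨅ k, q^[k] c
  suffices hL : L = 0 by rwa [hL] at hlim
  by_contra hL
  have hLpos : 0 < L := (le_ciInf hnonneg).lt_of_ne' hL
  have hfix : q L = L :=
    isFixedPt_of_tendsto_iterate hlim ((hq.1 L hLpos.le).continuousAt (Ici_mem_nhds hLpos))
  exact (hlt L hLpos).ne hfix

end IsClassK

theorem IsClassKInf.isClassK {γ : ℝ → ℝ} (h : IsClassKInf γ) : IsClassK γ :=
  ⟨h.1, h.2.1, h.2.2.1⟩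

theorem isClassK_add_sqrt : IsClassK (fun x => x + √x) :=
  ⟨continuousOn_id.add Real.continuous_sqrt.continuousOn,
    strictMonoOn_id.add_monotone fun _ _ _ _ hxy => Real.sqrt_le_sqrt hxy, by simp⟩

namespace IsClassKL

variable {β : ℝ → ℝ → ℝ} {s t t' : ℝ}

theorem isClassK (h : IsClassKL β) (ht : 0 ≤ t) : IsClassK (fun s => β s t) := h.1 t ht

theorem nonneg (h : IsClassKL β) (hs : 0 ≤ s) (ht : 0 ≤ t) : 0 ≤ β s t :=
  (h.isClassK ht).nonneg hs

theorem anti (h : IsClassKL β) (hs : 0 ≤ s) (ht : 0 ≤ t) (htt' : t ≤ t') : β s t' ≤ β s t :=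
  (h.2 s hs).1 ht (ht.trans htt') htt'

theorem exists_le (h : IsClassKL β) (hs : 0 ≤ s) {ε : ℝ} (hε : 0 < ε) :
    ∃ Δ, 0 ≤ Δ ∧ β s Δ ≤ ε := by
  obtain ⟨Δ, hΔ⟩ := (((h.2 s hs).2.eventually (eventually_le_nhds hε)).and
    (eventually_ge_atTop 0)).exists
  exact ⟨Δ, hΔ.2, hΔ.1⟩

end IsClassKL

theorem IsClassK.comp_isClassKL {α : ℝ → ℝ} {β : ℝ → ℝ → ℝ} (hα : IsClassK α)
    (h : IsClassKL β) :
    IsClassKL (fun s t => α (β s t)) := by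
  refine ⟨fun t ht => hα.comp (h.isClassK ht), fun s hs => ⟨?_, ?_⟩⟩
  · intro t ht t' ht' htt'
    exact hα.mono (h.nonneg hs ht') (h.anti hs ht htt')
  · have hβ : Tendsto (β s) atTop (𝓝[Ici 0] 0) :=
      tendsto_nhdsWithin_iff.2 ⟨(h.2 s hs).2, (eventually_ge_atTop 0).mono fun _ => h.nonneg hs⟩
    simpa only [hα.2.2, Function.comp_def] using (hα.1 0 self_mem_Ici).tendsto.comp hβ

theorem le_of_le_max_of_lt_self {f : ℝ → ℝ} {u A : ℝ} (hA : 0 ≤ A) (hf : ∀ s > 0, f s < s)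
    (h : u ≤ max A (f u)) : u ≤ A := by
  by_contra! hAu
  exact (max_lt hAu (hf u (hA.trans_lt hAu))).not_ge h

section WindowAverage

open MeasureTheory intervalIntegral

noncomputable def windowAverage (g : ℝ → ℝ) (s : ℝ) : ℝ := ∫ σ in s..s + 1, g σ

variable {g g' : ℝ → ℝ} {s : ℝ}

theorem windowAverage_eq (g : ℝ → ℝ) (s : ℝ) :
    windowAverage g s = ∫ σ in (0 : ℝ)..1, g (σ + s) := by
  rw [integral_comp_add_right, zero_add, add_comm, windowAverage]

theorem Monotone.continuous_windowAverage (hg : Monotone g) : Continuous (windowAverage g) := by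
  have hint : ∀ a b, IntervalIntegrable g volume a b := fun _ _ => hg.intervalIntegrable
  have h : windowAverage g = fun s => (∫ σ in (0 : ℝ)..s + 1, g σ) - ∫ σ in (0 : ℝ)..s, g σ :=
    funext fun s => (integral_interval_sub_left (hint 0 _) (hint 0 s)).symm
  rw [h]
  exact ((continuous_primitive hint 0).comp (continuous_add_const 1)).sub
    (continuous_primitive hint 0)

theorem Monotone.monotone_windowAverage (hg : Monotone g) : Monotone (windowAverage g) := by
  have hshift : ∀ c, Monotone fun σ => g (σ + c) := fun c _ _ h => hg (by linarith)
  intro s s' hss'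
  rw [windowAverage_eq, windowAverage_eq]
  exact intervalIntegral.integral_mono zero_le_one (hshift s).intervalIntegrable
    (hshift s').intervalIntegrable
    fun σ => hg (by linarith)

theorem Monotone.le_windowAverage (hg : Monotone g) : g s ≤ windowAverage g s :=
  calc g s = ∫ _σ in s..s + 1, g s := by simp
    _ ≤ windowAverage g s := integral_mono_on (by linarith) intervalIntegrable_const
      hg.intervalIntegrable fun _ hσ => hg hσ.1

theorem Monotone.windowAverage_le (hg : Monotone g) : windowAverage g s ≤ g (s + 1) := by
  have h : windowAverage g s ≤ ∫ _σ in s..s + 1, g (s + 1) := integral_mono_on (by linarith)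
    hg.intervalIntegrable intervalIntegrable_const fun _ hσ => hg hσ.2
  simpa using h

theorem windowAverage_le_windowAverage (hg : Monotone g) (hg' : Monotone g') (h : g ≤ g') :
    windowAverage g s ≤ windowAverage g' s :=
  intervalIntegral.integral_mono (by linarith) hg.intervalIntegrable hg'.intervalIntegrable h

end WindowAverage

section DecayProfile

variable {T : ℕ → ℕ → ℝ} {p p' : ℕ} {s τ τ' : ℝ}

/- `T i J` is a time after which the bound `2⁻¹ ^ J` holds for initial sizes up to `i`.
The constraint `J ≤ τ` keeps the set bounded; `sSup ∅ = 0` in `ℕ`. -/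
noncomputable def decayIndex (T : ℕ → ℕ → ℝ) (p : ℕ) (τ : ℝ) : ℕ :=
  sSup {J : ℕ | (J : ℝ) ≤ τ ∧ ∀ i ≤ p, T i J ≤ τ}

theorem bddAbove_decayIndexSet (T : ℕ → ℕ → ℝ) (p : ℕ) (τ : ℝ) :
    BddAbove {J : ℕ | (J : ℝ) ≤ τ ∧ ∀ i ≤ p, T i J ≤ τ} :=
  ⟨⌊τ⌋₊, fun _ hJ => Nat.le_floor hJ.1⟩

theorem decayIndex_anti (hp : p ≤ p') : decayIndex T p' τ ≤ decayIndex T p τ :=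
  csSup_le_csSup' (bddAbove_decayIndexSet T p τ) fun _ hJ =>
    ⟨hJ.1, fun i hi => hJ.2 i (hi.trans hp)⟩

theorem decayIndex_mono (hτ : τ ≤ τ') : decayIndex T p τ ≤ decayIndex T p τ' :=
  csSup_le_csSup' (bddAbove_decayIndexSet T p τ') fun _ hJ =>
    ⟨hJ.1.trans hτ, fun i hi => (hJ.2 i hi).trans hτ⟩

theorem decayIndex_eq_zero_or (T : ℕ → ℕ → ℝ) (p : ℕ) (τ : ℝ) :
    decayIndex T p τ = 0 ∨ T p (decayIndex T p τ) ≤ τ := by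
  rcases eq_empty_or_nonempty {J : ℕ | (J : ℝ) ≤ τ ∧ ∀ i ≤ p, T i J ≤ τ} with h | h
  · left
    rw [decayIndex, h, csSup_empty]
    rfl
  · exact Or.inr ((Nat.sSup_mem h (bddAbove_decayIndexSet T p τ)).2 p le_rfl)

theorem tendsto_decayIndex (T : ℕ → ℕ → ℝ) (p : ℕ) : Tendsto (decayIndex T p) atTop atTop := by
  refine tendsto_atTop.2 fun J => ?_
  have hT : ∀ᶠ τ in atTop, ∀ i ∈ Iic p, T i J ≤ τ :=
    (finite_Iic p).eventually_all.2 fun i _ => eventually_ge_atTop (T i J)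
  filter_upwards [eventually_ge_atTop (J : ℝ), hT] with τ hJ hT
  exact le_csSup (bddAbove_decayIndexSet T p τ) ⟨hJ, hT⟩

theorem monotone_decayStep (T : ℕ → ℕ → ℝ) (τ : ℝ) :
    Monotone fun σ : ℝ => (2⁻¹ : ℝ) ^ decayIndex T ⌈σ⌉₊ τ := fun _ _ h =>
  pow_le_pow_of_le_one (by norm_num) (by norm_num) (decayIndex_anti (Nat.ceil_mono h))

noncomputable def decayProfile (T : ℕ → ℕ → ℝ) (s τ : ℝ) : ℝ :=
  windowAverage (fun σ => (2⁻¹ : ℝ) ^ decayIndex T ⌈σ⌉₊ τ) s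

theorem le_decayProfile : (2⁻¹ : ℝ) ^ decayIndex T ⌈s⌉₊ τ ≤ decayProfile T s τ :=
  (monotone_decayStep T τ).le_windowAverage

theorem decayProfile_pos : 0 < decayProfile T s τ :=
  (pow_pos (by norm_num) _).trans_le le_decayProfile

theorem decayProfile_anti (hτ : τ ≤ τ') : decayProfile T s τ' ≤ decayProfile T s τ :=
  windowAverage_le_windowAverage (monotone_decayStep T τ') (monotone_decayStep T τ) fun _ =>
    pow_le_pow_of_le_one (by norm_num) (by norm_num) (decayIndex_mono hτ)

theorem tendsto_decayProfile (T : ℕ → ℕ → ℝ) (s : ℝ) :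
    Tendsto (decayProfile T s) atTop (𝓝 0) :=
  squeeze_zero (fun _ => decayProfile_pos.le) (fun _ => (monotone_decayStep T _).windowAverage_le)
    ((tendsto_pow_atTop_nhds_zero_of_lt_one (by norm_num) (by norm_num)).comp
      (tendsto_decayIndex T _))

theorem IsClassK.isClassKL_mul_decayProfile {m : ℝ → ℝ} (hm : IsClassK m) (T : ℕ → ℕ → ℝ) :
    IsClassKL fun s τ => m s * decayProfile T s τ := by
  refine ⟨fun τ _ => ⟨?_, ?_, by simp only [hm.2.2, zero_mul]⟩, fun s hs => ⟨?_, ?_⟩⟩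
  · exact hm.1.mul (monotone_decayStep T τ).continuous_windowAverage.continuousOn
  · intro a ha b hb hab
    calc m a * decayProfile T a τ ≤ m a * decayProfile T b τ :=
          mul_le_mul_of_nonneg_left ((monotone_decayStep T τ).monotone_windowAverage hab.le)
            (hm.nonneg ha)
      _ < m b * decayProfile T b τ := mul_lt_mul_of_pos_right (hm.2.1 ha hb hab) decayProfile_pos
  · exact fun _ _ _ _ hτ => mul_le_mul_of_nonneg_left (decayProfile_anti hτ) (hm.nonneg hs)
  · simpa only [mul_zero] using (tendsto_decayProfile T s).const_mul (m s)

theorem IsClassK.exists_isClassKL_of_decay {m : ℝ → ℝ} (hm : IsClassK m) (T : ℕ → ℕ → ℝ) :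
    ∃ β : ℝ → ℝ → ℝ, IsClassKL β ∧ ∀ s τ u, 0 ≤ u → u ≤ m s →
      (∀ J, T ⌈s⌉₊ J ≤ τ → u ≤ (2⁻¹ : ℝ) ^ J) → u ≤ β s τ := by
  refine ⟨fun s τ => m s * decayProfile T s τ + √(m s * decayProfile T s τ),
    isClassK_add_sqrt.comp_isClassKL (hm.isClassKL_mul_decayProfile T),
    fun s τ u hu hum hdecay => ?_⟩
  have hP := le_decayProfile (T := T) (s := s) (τ := τ)
  have hm0 := hu.trans hum
  -- Before the first decay time the profile is `1` and `m s * 1` is the bound; afterwards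
  -- `u ≤ min (m s) (decayProfile T s τ) ≤ √(m s * decayProfile T s τ)`.
  rcases decayIndex_eq_zero_or T ⌈s⌉₊ τ with hJ | hJ
  · rw [hJ, pow_zero] at hP
    exact (hum.trans (le_mul_of_one_le_right hm0 hP)).trans
      (le_add_of_nonneg_right (Real.sqrt_nonneg _))
  · refine (Real.le_sqrt_of_sq_le ?_).trans
      (le_add_of_nonneg_left (mul_nonneg hm0 decayProfile_pos.le))
    rw [sq]
    exact mul_le_mul hum ((hdecay _ hJ).trans hP) hu hm0

end DecayProfile

section SupNorm

variable {E : Type*} [NormedAddCommGroup E] {v : ℝ → E} {a b c d t0 : ℝ}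

theorem supNorm_nonneg : 0 ≤ supNorm v a b :=
  Real.sSup_nonneg (by rintro _ ⟨τ, -, rfl⟩; exact norm_nonneg _)

theorem le_supNorm (hv : BddAbove ((fun τ => ‖v τ‖) '' Icc a b)) {τ : ℝ} (hτ : τ ∈ Icc a b) :
    ‖v τ‖ ≤ supNorm v a b :=
  le_csSup hv ⟨τ, hτ, rfl⟩

theorem supNorm_le (hab : a ≤ b) {C : ℝ} (h : ∀ τ ∈ Icc a b, ‖v τ‖ ≤ C) : supNorm v a b ≤ C :=
  csSup_le ⟨_, a, left_mem_Icc.2 hab, rfl⟩ (by rintro _ ⟨τ, hτ, rfl⟩; exact h τ hτ)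

theorem supNorm_mono (hv : BddAbove ((fun τ => ‖v τ‖) '' Icc a b)) (hac : a ≤ c) (hcd : c ≤ d)
    (hdb : d ≤ b) : supNorm v c d ≤ supNorm v a b :=
  csSup_le_csSup hv ⟨_, c, left_mem_Icc.2 hcd, rfl⟩ (image_mono (Icc_subset_Icc hac hdb))

theorem ContinuousOn.bddAbove_norm_Icc (hv : ContinuousOn v (Ici t0)) (ha : t0 ≤ a) :
    BddAbove ((fun τ => ‖v τ‖) '' Icc a b) :=
  (isCompact_Icc.image_of_continuousOn
    (hv.norm.mono fun _ hτ => ha.trans hτ.1)).bddAbove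

theorem BddAbove.norm_Icc (hv : BddAbove ((fun τ => ‖v τ‖) '' Ici t0)) (ha : t0 ≤ a) :
    BddAbove ((fun τ => ‖v τ‖) '' Icc a b) :=
  hv.mono (image_mono fun _ hτ => ha.trans hτ.1)

end SupNorm

section Interconnection

variable {E F G : Type*} [NormedAddCommGroup E] [NormedAddCommGroup F] [NormedAddCommGroup G]
  {βa βb : ℝ → ℝ → ℝ} {γab γar γba γbr : ℝ → ℝ} {t0 : ℝ} {a : ℝ → E} {b : ℝ → F} {r : ℝ → G}

def HasISSEstimate (β : ℝ → ℝ → ℝ) (γv γr : ℝ → ℝ) (t0 : ℝ) (a : ℝ → E) (v : ℝ → F)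
    (r : ℝ → G) : Prop :=
  ∀ t0' t', t0 ≤ t0' → t0' ≤ t' →
    ‖a t'‖ ≤ max (β ‖a t0'‖ (t' - t0')) (max (γv (supNorm v t0' t')) (γr (supNorm r t0' t')))

theorem HasISSEstimate.supNorm_le {β : ℝ → ℝ → ℝ} {γv γr : ℝ → ℝ} {T : ℝ} {v : ℝ → F}
    (H : HasISSEstimate β γv γr t0 a v r) (hβ : IsClassKL β)
    (hγv : IsClassK γv) (hγr : IsClassK γr) (hv : BddAbove ((fun τ => ‖v τ‖) '' Icc t0 T))
    (hr : BddAbove ((fun τ => ‖r τ‖) '' Icc t0 T)) (hT : t0 ≤ T) :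
    supNorm a t0 T ≤
      max (β ‖a t0‖ 0) (max (γv (supNorm v t0 T)) (γr (supNorm r t0 T))) :=
  _root_.supNorm_le hT fun t ht => (H t0 t le_rfl ht.1).trans <|
    max_le_max (hβ.anti (norm_nonneg _) le_rfl (sub_nonneg.2 ht.1)) <|
      max_le_max (hγv.mono supNorm_nonneg (supNorm_mono hv le_rfl ht.1 ht.2))
        (hγr.mono supNorm_nonneg (supNorm_mono hr le_rfl ht.1 ht.2))

structure IsSmallGainPair (βa βb : ℝ → ℝ → ℝ) (γab γar γba γbr : ℝ → ℝ) : Prop where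
  klA : IsClassKL βa
  klB : IsClassKL βb
  ab : IsClassK γab
  ar : IsClassK γar
  ba : IsClassK γba
  br : IsClassK γbr
  smallGain : ∀ s > 0, γab (γba s) < s

def inputGain (γab γar γbr : ℝ → ℝ) (R : ℝ) : ℝ := max (γar R) (γab (γbr R))

-- A sum rather than a max of the two terms, so that it is strictly increasing.
def stabilityGain (βa : ℝ → ℝ → ℝ) (γab : ℝ → ℝ) (βb : ℝ → ℝ → ℝ) (s : ℝ) : ℝ :=
  βa s 0 + γab (βb s 0)

namespace IsSmallGainPair

variable {R R' ε' X : ℝ}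

theorem swap (hG : IsSmallGainPair βa βb γab γar γba γbr) :
    IsSmallGainPair βb βa γba γbr γab γar :=
  ⟨hG.klB, hG.klA, hG.ba, hG.br, hG.ab, hG.ar, hG.ab.comp_lt_self_swap hG.smallGain⟩

theorem inputGain_nonneg (hG : IsSmallGainPair βa βb γab γar γba γbr) (hR : 0 ≤ R) :
    0 ≤ inputGain γab γar γbr R :=
  le_max_of_le_left (hG.ar.nonneg hR)

theorem inputGain_mono (hG : IsSmallGainPair βa βb γab γar γba γbr) (hR : 0 ≤ R)
    (hRR' : R ≤ R') : inputGain γab γar γbr R ≤ inputGain γab γar γbr R' :=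
  max_le_max (hG.ar.mono hR hRR') (hG.ab.mono (hG.br.nonneg hR) (hG.br.mono hR hRR'))

theorem gain_inputGain_le (hG : IsSmallGainPair βa βb γab γar γba γbr) (hR : 0 ≤ R) :
    γab (inputGain γba γbr γar R) ≤ inputGain γab γar γbr R := by
  rw [inputGain, hG.ab.map_max (hG.br.nonneg hR) (hG.ba.nonneg (hG.ar.nonneg hR))]
  exact max_le (le_max_right _ _)
    (le_max_of_le_left ((hG.ab.comp hG.ba).le_self hG.smallGain (hG.ar.nonneg hR)))

theorem isClassK_stabilityGain (hG : IsSmallGainPair βa βb γab γar γba γbr) :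
    IsClassK (stabilityGain βa γab βb) :=
  (hG.klA.isClassK le_rfl).add (hG.ab.comp (hG.klB.isClassK le_rfl))

-- A bound `max e X` on `a`, with `e := max ε' (γab ε')`, becomes `max e (γab (γba X))` after one
-- passage around the loop.
theorem loop_le (hG : IsSmallGainPair βa βb γab γar γba γbr) (hε' : 0 ≤ ε') (hX : 0 ≤ X) :
    max ε' (γab (max ε' (γba (max (max ε' (γab ε')) X)))) ≤
      max (max ε' (γab ε')) (γab (γba X)) := by
  have he : 0 ≤ max ε' (γab ε') := le_max_of_le_left hε'
  have hq := (hG.ab.comp hG.ba).le_self hG.smallGain he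
  rw [hG.ba.map_max he hX, hG.ab.map_max hε' (le_max_of_le_left (hG.ba.nonneg he)),
    hG.ab.map_max (hG.ba.nonneg he) (hG.ba.nonneg hX)]
  grind

end IsSmallGainPair

structure IsISSInterconnection (βa βb : ℝ → ℝ → ℝ) (γab γar γba γbr : ℝ → ℝ) (t0 : ℝ)
    (a : ℝ → E) (b : ℝ → F) (r : ℝ → G) : Prop where
  contA : ContinuousOn a (Ici t0)
  contB : ContinuousOn b (Ici t0)
  bddR : BddAbove ((fun τ => ‖r τ‖) '' Ici t0)
  issA : HasISSEstimate βa γab γar t0 a b r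
  issB : HasISSEstimate βb γba γbr t0 b a r

namespace IsISSInterconnection

theorem swap (hI : IsISSInterconnection βa βb γab γar γba γbr t0 a b r) :
    IsISSInterconnection βb βa γba γbr γab γar t0 b a r :=
  ⟨hI.contB, hI.contA, hI.bddR, hI.issB, hI.issA⟩

theorem supNorm_le (hG : IsSmallGainPair βa βb γab γar γba γbr)
    (hI : IsISSInterconnection βa βb γab γar γba γbr t0 a b r) {T : ℝ} (hT : t0 ≤ T) :
    supNorm a t0 T ≤ max (max (βa ‖a t0‖ 0) (γab (βb ‖b t0‖ 0)))
      (inputGain γab γar γbr (supNorm r t0 T)) := by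
  set Z := supNorm a t0 T
  set X := supNorm b t0 T
  set R := supNorm r t0 T
  have hbddR := hI.bddR.norm_Icc (b := T) le_rfl
  have hZ := hI.issA.supNorm_le hG.klA hG.ab hG.ar (hI.contB.bddAbove_norm_Icc le_rfl) hbddR hT
  have hX := hI.issB.supNorm_le hG.klB hG.ba hG.br (hI.contA.bddAbove_norm_Icc le_rfl) hbddR hT
  have hγX : γab X ≤ max (γab (βb ‖b t0‖ 0)) (max (γab (γba Z)) (γab (γbr R))) := by
    have hb0 := hG.klB.nonneg (norm_nonneg (b t0)) le_rfl
    rw [← hG.ab.map_max (hG.ba.nonneg supNorm_nonneg) (hG.br.nonneg supNorm_nonneg),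
      ← hG.ab.map_max hb0 (le_max_of_le_left (hG.ba.nonneg supNorm_nonneg))]
    exact hG.ab.mono supNorm_nonneg hX
  -- Substituting `hX` into `hZ` gives `Z ≤ max A (γab (γba Z))`; small gain absorbs the last term.
  refine le_of_le_max_of_lt_self (le_max_of_le_right (hG.inputGain_nonneg supNorm_nonneg))
    hG.smallGain ?_
  simp only [inputGain]
  grind

theorem norm_le_stabilityGain (hG : IsSmallGainPair βa βb γab γar γba γbr)
    (hI : IsISSInterconnection βa βb γab γar γba γbr t0 a b r) {s t : ℝ} (ha : ‖a t0‖ ≤ s)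
    (hb : ‖b t0‖ ≤ s) (ht : t0 ≤ t) :
    ‖a t‖ ≤ max (stabilityGain βa γab βb s) (inputGain γab γar γbr (supNorm r t0 t)) := by
  have hβa := hG.klA.isClassK le_rfl
  have hβb := hG.klB.isClassK le_rfl
  have hs := (norm_nonneg _).trans ha
  refine (le_supNorm (hI.contA.bddAbove_norm_Icc le_rfl) ⟨ht, le_rfl⟩).trans <|
    (hI.supNorm_le hG ht).trans (max_le_max (max_le ?_ ?_) le_rfl)
  · exact le_add_of_le_of_nonneg (hβa.mono (norm_nonneg _) ha) (hG.ab.nonneg (hβb.nonneg hs))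
  · exact le_add_of_nonneg_of_le (hβa.nonneg hs)
      (hG.ab.mono (hβb.nonneg (norm_nonneg _)) (hβb.mono (norm_nonneg _) hb))

theorem norm_le_of_forall_norm_le (hG : IsSmallGainPair βa βb γab γar γba γbr)
    (hI : IsISSInterconnection βa βb γab γar γba γbr t0 a b r) {M d ε T Δ : ℝ} (hd0 : 0 ≤ d)
    (hT : 0 ≤ T) (hΔ : 0 ≤ Δ)
    (hM : ∀ t, t0 ≤ t → ‖a t‖ ≤ max M (inputGain γab γar γbr (supNorm r t0 t)))
    (hMΔ : βa M Δ ≤ ε)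
    (hd : ∀ t, t0 + T ≤ t → ‖b t‖ ≤ max d (inputGain γba γbr γar (supNorm r t0 t))) :
    ∀ t, t0 + (T + Δ) ≤ t →
      ‖a t‖ ≤ max (max ε (γab d)) (inputGain γab γar γbr (supNorm r t0 t)) := by
  intro t ht
  set R := supNorm r t0 t
  by_cases hMR : M ≤ inputGain γab γar γbr R
  · exact (hM t (by linarith)).trans (by rw [max_eq_right hMR]; exact le_max_right _ _)
  rw [not_le] at hMR
  -- Restart the estimate of `a` at `t - Δ`, where the uniform bound `M` has already decayed.
  have hbddR := hI.bddR.norm_Icc (b := t) le_rfl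
  have hRmono : ∀ τ ∈ Icc t0 t, supNorm r t0 τ ≤ R := fun τ hτ =>
    supNorm_mono hbddR le_rfl hτ.1 hτ.2
  have hmid : t0 + T ≤ t - Δ := by linarith
  have hβ : βa ‖a (t - Δ)‖ (t - (t - Δ)) ≤ ε := by
    rw [sub_sub_cancel]
    refine (hG.klA.isClassK hΔ |>.mono (norm_nonneg _) ?_).trans hMΔ
    have := (hM (t - Δ) (by linarith)).trans (max_le_max le_rfl (hG.inputGain_mono
      supNorm_nonneg (hRmono _ ⟨by linarith, by linarith⟩)))
    rwa [max_eq_left hMR.le] at this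
  have hγb : γab (supNorm b (t - Δ) t) ≤ max (γab d) (inputGain γab γar γbr R) := by
    have hb : supNorm b (t - Δ) t ≤ max d (inputGain γba γbr γar R) :=
      _root_.supNorm_le (by linarith) fun τ hτ => (hd τ (hmid.trans hτ.1)).trans
        (max_le_max le_rfl (hG.swap.inputGain_mono supNorm_nonneg
          (hRmono τ ⟨by linarith [hτ.1], hτ.2⟩)))
    refine (hG.ab.mono supNorm_nonneg hb).trans ?_
    rw [hG.ab.map_max hd0 (hG.swap.inputGain_nonneg supNorm_nonneg)]
    exact max_le_max le_rfl (hG.gain_inputGain_le supNorm_nonneg)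
  have hγr : γar (supNorm r (t - Δ) t) ≤ inputGain γab γar γbr R :=
    le_max_of_le_left (hG.ar.mono supNorm_nonneg
      (supNorm_mono hbddR (by linarith) (by linarith) le_rfl))
  have := hI.issA (t - Δ) t (by linarith) (by linarith)
  grind

theorem norm_le_after_loop (hG : IsSmallGainPair βa βb γab γar γba γbr)
    (hI : IsISSInterconnection βa βb γab γar γba γbr t0 a b r) {s c ε T Δa Δb : ℝ}
    (ha : ‖a t0‖ ≤ s) (hb : ‖b t0‖ ≤ s) (hc0 : 0 ≤ c) (hε : 0 ≤ ε) (hT : 0 ≤ T) (hΔa : 0 ≤ Δa)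
    (hΔb : 0 ≤ Δb) (hβa : βa (stabilityGain βa γab βb s) Δa ≤ ε)
    (hβb : βb (stabilityGain βb γba βa s) Δb ≤ ε)
    (hc : ∀ t, t0 + T ≤ t → ‖a t‖ ≤ max c (inputGain γab γar γbr (supNorm r t0 t))) :
    ∀ t, t0 + (T + Δb + Δa) ≤ t →
      ‖a t‖ ≤ max (max ε (γab (max ε (γba c)))) (inputGain γab γar γbr (supNorm r t0 t)) := by
  have hbT := hI.swap.norm_le_of_forall_norm_le hG.swap hc0 hT hΔb
    (fun t ht => hI.swap.norm_le_stabilityGain hG.swap hb ha ht) hβb hc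
  exact hI.norm_le_of_forall_norm_le hG (le_max_of_le_left hε) (by positivity) hΔa
    (fun t ht => hI.norm_le_stabilityGain hG ha hb ht) hβa hbT

end IsISSInterconnection

theorem IsSmallGainPair.exists_norm_le (hG : IsSmallGainPair βa βb γab γar γba γbr) {s ε : ℝ}
    (hs : 0 ≤ s) (hε : 0 < ε) :
    ∃ T, 0 ≤ T ∧ ∀ (t0 : ℝ) (a : ℝ → E) (b : ℝ → F) (r : ℝ → G),
      IsISSInterconnection βa βb γab γar γba γbr t0 a b r → ‖a t0‖ ≤ s → ‖b t0‖ ≤ s →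
        ∀ t, t0 + T ≤ t → ‖a t‖ ≤ max ε (inputGain γab γar γbr (supNorm r t0 t)) := by
  obtain ⟨ε', hε', hε'ε, hγε'⟩ := hG.ab.exists_pos_le hε
  set c0 := stabilityGain βa γab βb s
  have hc0 : 0 ≤ c0 := hG.isClassK_stabilityGain.nonneg hs
  obtain ⟨Δa, hΔa, hβa⟩ := hG.klA.exists_le hc0 hε'
  obtain ⟨Δb, hΔb, hβb⟩ := hG.klB.exists_le (hG.swap.isClassK_stabilityGain.nonneg hs) hε'
  set q := fun c => γab (γba c)
  have hq : IsClassK q := hG.ab.comp hG.ba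
  have hloop : ∀ k : ℕ, ∃ T, 0 ≤ T ∧ ∀ (t0 : ℝ) (a : ℝ → E) (b : ℝ → F) (r : ℝ → G),
      IsISSInterconnection βa βb γab γar γba γbr t0 a b r → ‖a t0‖ ≤ s → ‖b t0‖ ≤ s →
        ∀ t, t0 + T ≤ t → ‖a t‖ ≤ max (max (max ε' (γab ε')) (q^[k] c0))
          (inputGain γab γar γbr (supNorm r t0 t)) := by
    intro k
    induction k with
    | zero =>
      exact ⟨0, le_rfl, fun t0 a b r hI ha hb t ht => (hI.norm_le_stabilityGain hG ha hb
        (by linarith)).trans (max_le_max (le_max_right _ _) le_rfl)⟩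
    | succ k ih =>
      obtain ⟨T, hT, hTk⟩ := ih
      refine ⟨T + Δb + Δa, by positivity, fun t0 a b r hI ha hb => ?_⟩
      have haT := hI.norm_le_after_loop hG ha hb
        (le_max_of_le_left (le_max_of_le_left hε'.le)) hε'.le hT hΔa hΔb hβa hβb
        (hTk t0 a b r hI ha hb)
      intro t ht
      refine (haT t ht).trans (max_le_max ?_ le_rfl)
      rw [Function.iterate_succ_apply']
      exact hG.loop_le hε'.le (hq.mapsTo.iterate k hc0)
  obtain ⟨k, hk⟩ := ((hq.tendsto_iterate_zero hG.smallGain hc0).eventually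
    (eventually_le_nhds hε)).exists
  obtain ⟨T, hT, hTk⟩ := hloop k
  exact ⟨T, hT, fun t0 a b r hI ha hb t ht => (hTk t0 a b r hI ha hb t ht).trans
    (max_le_max (max_le (max_le hε'ε hγε') hk) le_rfl)⟩

theorem IsSmallGainPair.exists_isClassKL (hG : IsSmallGainPair βa βb γab γar γba γbr) :
    ∃ β : ℝ → ℝ → ℝ, IsClassKL β ∧ ∀ (t0 : ℝ) (a : ℝ → E) (b : ℝ → F) (r : ℝ → G),
      IsISSInterconnection βa βb γab γar γba γbr t0 a b r → ∀ s, ‖a t0‖ ≤ s → ‖b t0‖ ≤ s →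
        ∀ t, t0 ≤ t → ‖a t‖ ≤ max (β s (t - t0)) (inputGain γab γar γbr (supNorm r t0 t)) := by
  choose T _ hT using fun p J : ℕ =>
    hG.exists_norm_le (E := E) (F := F) (G := G) p.cast_nonneg
      (pow_pos (by norm_num : (0 : ℝ) < 2⁻¹) J)
  obtain ⟨β, hβ, hβ_le⟩ := hG.isClassK_stabilityGain.exists_isClassKL_of_decay T
  refine ⟨β, hβ, fun t0 a b r hI s ha hb t ht => ?_⟩
  rcases le_or_gt ‖a t‖ (inputGain γab γar γbr (supNorm r t0 t)) with hr | hr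
  · exact le_max_of_le_right hr
  have hs : s ≤ ⌈s⌉₊ := Nat.le_ceil s
  refine le_max_of_le_left (hβ_le s (t - t0) _ (norm_nonneg _) ?_ fun J hJ => ?_)
  · exact (le_max_iff.1 (hI.norm_le_stabilityGain hG ha hb ht)).resolve_right hr.not_ge
  · exact (le_max_iff.1 (hT _ J t0 a b r hI (ha.trans hs) (hb.trans hs) t
      (by linarith))).resolve_right hr.not_ge

end Interconnection

/-- Lemma 1 of the paper: trajectory-based small-gain theorem for an interconnection
of two ISS subsystems with a common external input `r`. -/
theorem small_gain_interconnection {q n m : ℕ}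
    (βz βx : ℝ → ℝ → ℝ) (hβz : IsClassKL βz) (hβx : IsClassKL βx)
    (γzx γzr γxz γxr : ℝ → ℝ)
    (hγzx : IsClassKInf γzx) (hγzr : IsClassKInf γzr)
    (hγxz : IsClassKInf γxz) (hγxr : IsClassKInf γxr)
    (hsg : ∀ s > 0, γzx (γxz s) < s) :
    ∃ βbz βbx : ℝ → ℝ → ℝ, IsClassKL βbz ∧ IsClassKL βbx ∧
      ∀ (t0 : ℝ) (z : ℝ → EuclideanSpace ℝ (Fin q)) (x : ℝ → EuclideanSpace ℝ (Fin n))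
        (r : ℝ → EuclideanSpace ℝ (Fin m)),
        ContinuousOn z (Set.Ici t0) → ContinuousOn x (Set.Ici t0) →
        BddAbove ((fun τ => ‖r τ‖) '' Set.Ici t0) →
        (∀ t0' t', t0 ≤ t0' → t0' ≤ t' →
          ‖z t'‖ ≤ max (βz ‖z t0'‖ (t' - t0'))
            (max (γzx (supNorm x t0' t')) (γzr (supNorm r t0' t')))) →
        (∀ t0' t', t0 ≤ t0' → t0' ≤ t' →
          ‖x t'‖ ≤ max (βx ‖x t0'‖ (t' - t0'))
            (max (γxz (supNorm z t0' t')) (γxr (supNorm r t0' t')))) →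
        ∀ t', t0 ≤ t' →
          ‖z t'‖ ≤ max (βbz (Real.sqrt (‖z t0‖ ^ 2 + ‖x t0‖ ^ 2)) (t' - t0))
            (max (γzr (supNorm r t0 t')) (γzx (γxr (supNorm r t0 t')))) ∧
          ‖x t'‖ ≤ max (βbx (Real.sqrt (‖z t0‖ ^ 2 + ‖x t0‖ ^ 2)) (t' - t0))
            (max (γxr (supNorm r t0 t')) (γxz (γzr (supNorm r t0 t')))) := by
  have hG : IsSmallGainPair βz βx γzx γzr γxz γxr :=
    ⟨hβz, hβx, hγzx.isClassK, hγzr.isClassK, hγxz.isClassK, hγxr.isClassK, hsg⟩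
  obtain ⟨βbz, hβbz, hz⟩ := hG.exists_isClassKL (E := EuclideanSpace ℝ (Fin q))
    (F := EuclideanSpace ℝ (Fin n)) (G := EuclideanSpace ℝ (Fin m))
  obtain ⟨βbx, hβbx, hx⟩ := hG.swap.exists_isClassKL (E := EuclideanSpace ℝ (Fin n))
    (F := EuclideanSpace ℝ (Fin q)) (G := EuclideanSpace ℝ (Fin m))
  refine ⟨βbz, βbx, hβbz, hβbx, fun t0 z x r hzc hxc hr Hz Hx t ht => ?_⟩
  have hI : IsISSInterconnection βz βx γzx γzr γxz γxr t0 z x r := ⟨hzc, hxc, hr, Hz, Hx⟩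
  have hz0 : ‖z t0‖ ≤ √(‖z t0‖ ^ 2 + ‖x t0‖ ^ 2) :=
    Real.le_sqrt_of_sq_le (le_add_of_nonneg_right (sq_nonneg _))
  have hx0 : ‖x t0‖ ≤ √(‖z t0‖ ^ 2 + ‖x t0‖ ^ 2) :=
    Real.le_sqrt_of_sq_le (le_add_of_nonneg_left (sq_nonneg _))
  exact ⟨hz t0 z x r hI _ hz0 hx0 t ht, hx t0 x z r hI.swap _ hx0 hz0 t ht⟩
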